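/- arXiv:2511.05291 — 9 statements merged into one kernel-verified Lean document; each statement's English description precedes it below -/
import Mathlib

section
/- Let (N,v) be a TU game with veto player a (v(S)=0 whenever a ∉ S) and let ε ≥ 0. The following are equivalent: (i) the strong ε-core is nonempty; (ii) the allocation x with x_i = ε for i ≠ a and x_a = v(N) − ε(|N|−1) is in the strong ε-core; (iii) ε ≤ (v(N) − v(S)) / (|N| − |S| + 1) for every proper coalition S containing a. -/
open Finset

/-- The strong ε-core of a TU game. -/
def epsCore {ι : Type*} [Fintype ι] [DecidableEq ι] (v : Finset ι → ℝ) (ε : ℝ) :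
    Set (ι → ℝ) :=
  {x | (∑ i, x i) = v Finset.univ ∧
    ∀ S : Finset ι, S.Nonempty → S ≠ Finset.univ → v S + ε ≤ ∑ i ∈ S, x i}

/-!
Every player `i ≠ a` forms a proper singleton coalition of value `0`, so an allocation in the
strong ε-core pays each of them at least `ε`; summing this over `Sᶜ` and adding
`x(S) ≥ v(S) + ε` gives `v(N) ≥ v(S) + ε (|N| - |S| + 1)` for every proper coalition `S ∋ a`.
The allocation paying exactly `ε` to every `i ≠ a` has `x(S) = v(N) - ε (|N| - |S|)` on such `S`,
so it satisfies exactly these constraints; those of coalitions without `a` hold since `ε ≥ 0`.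
-/

section

variable {ι : Type*} [Fintype ι]

lemma card_sub_card_add_one_pos (S : Finset ι) : (0 : ℝ) < Fintype.card ι - #S + 1 := by
  have : (#S : ℝ) ≤ Fintype.card ι := by exact_mod_cast card_le_univ S
  linarith

variable [DecidableEq ι]

lemma le_apply_of_mem_epsCore {v : Finset ι → ℝ} {ε : ℝ} {x : ι → ℝ} (hx : x ∈ epsCore v ε)
    (hcard : 2 ≤ Fintype.card ι) {i : ι} (hi : v {i} = 0) : ε ≤ x i := by
  have hne : ({i} : Finset ι) ≠ univ := by
    intro h
    have := card_univ (α := ι)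
    rw [← h, card_singleton] at this
    omega
  simpa [hi] using hx.2 {i} (singleton_nonempty i) hne

lemma add_mul_le_of_mem_epsCore {v : Finset ι → ℝ} {a : ι} (hcard : 2 ≤ Fintype.card ι)
    (hveto : ∀ S : Finset ι, a ∉ S → v S = 0) {ε : ℝ} {x : ι → ℝ} (hx : x ∈ epsCore v ε)
    {S : Finset ι} (hSne : S.Nonempty) (hS : S ≠ univ) (haS : a ∈ S) :
    v S + ε * (Fintype.card ι - #S + 1) ≤ v univ := by
  have hcompl : ∀ i ∈ Sᶜ, ε ≤ x i := fun i hi =>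
    le_apply_of_mem_epsCore hx hcard <|
      hveto _ <| notMem_singleton.2 <| ne_of_mem_of_not_mem haS (mem_compl.1 hi)
  calc v S + ε * (Fintype.card ι - #S + 1) = (v S + ε) + ∑ _i ∈ Sᶜ, ε := by
        rw [sum_const, card_compl, nsmul_eq_mul, Nat.cast_sub (card_le_univ S)]
        ring
    _ ≤ ∑ i ∈ S, x i + ∑ i ∈ Sᶜ, x i := add_le_add (hx.2 S hSne hS) (sum_le_sum hcompl)
    _ = v univ := by rw [sum_add_sum_compl, hx.1]

def vetoAllocation (v : Finset ι → ℝ) (a : ι) (ε : ℝ) : ι → ℝ :=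
  fun i => if i = a then v univ - ε * ((Fintype.card ι : ℝ) - 1) else ε

lemma vetoAllocation_of_ne (v : Finset ι → ℝ) (ε : ℝ) {a i : ι} (hi : i ≠ a) :
    vetoAllocation v a ε i = ε :=
  if_neg hi

lemma sum_vetoAllocation_of_mem (v : Finset ι → ℝ) (ε : ℝ) {a : ι} {S : Finset ι} (haS : a ∈ S) :
    ∑ i ∈ S, vetoAllocation v a ε i = v univ - ε * (Fintype.card ι - #S) := by
  rw [← add_sum_erase _ _ haS,
    sum_congr rfl fun i hi => vetoAllocation_of_ne v ε (ne_of_mem_erase hi), sum_const,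
    card_erase_of_mem haS, nsmul_eq_mul, Nat.cast_sub (card_pos.2 ⟨a, haS⟩), vetoAllocation,
    if_pos rfl]
  push_cast
  ring

lemma sum_vetoAllocation_of_not_mem (v : Finset ι → ℝ) (ε : ℝ) {a : ι} {S : Finset ι}
    (haS : a ∉ S) : ∑ i ∈ S, vetoAllocation v a ε i = #S * ε := by
  rw [sum_congr rfl fun i hi => vetoAllocation_of_ne v ε (ne_of_mem_of_not_mem hi haS), sum_const,
    nsmul_eq_mul]

lemma vetoAllocation_mem_epsCore_iff {v : Finset ι → ℝ} {a : ι}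
    (hveto : ∀ S : Finset ι, a ∉ S → v S = 0) {ε : ℝ} (hε : 0 ≤ ε) :
    vetoAllocation v a ε ∈ epsCore v ε ↔
      ∀ S : Finset ι, S.Nonempty → S ≠ univ → a ∈ S →
        v S + ε * (Fintype.card ι - #S + 1) ≤ v univ := by
  constructor
  · rintro ⟨-, hx⟩ S hSne hS haS
    have := hx S hSne hS
    rw [sum_vetoAllocation_of_mem v ε haS] at this
    linarith
  · intro h
    refine ⟨by simp [sum_vetoAllocation_of_mem v ε (mem_univ a)], fun S hSne hS => ?_⟩
    by_cases haS : a ∈ S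
    · rw [sum_vetoAllocation_of_mem v ε haS]
      linarith [h S hSne hS haS]
    · rw [sum_vetoAllocation_of_not_mem v ε haS, hveto S haS, zero_add]
      have : (1 : ℝ) ≤ #S := by exact_mod_cast hSne.card_pos
      nlinarith

end

theorem stmt3_general {ι : Type*} [Fintype ι] [DecidableEq ι] (v : Finset ι → ℝ) (a : ι)
    (hcard : 2 ≤ Fintype.card ι)
    (hveto : ∀ S : Finset ι, a ∉ S → v S = 0)
    (ε : ℝ) (hε : 0 ≤ ε) :
    ((epsCore v ε).Nonempty ↔
      (fun i => if i = a then v Finset.univ - ε * ((Fintype.card ι : ℝ) - 1) else ε)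
        ∈ epsCore v ε) ∧
    ((fun i => if i = a then v Finset.univ - ε * ((Fintype.card ι : ℝ) - 1) else ε)
        ∈ epsCore v ε ↔
      ∀ S : Finset ι, S.Nonempty → S ≠ Finset.univ → a ∈ S →
        ε ≤ (v Finset.univ - v S) / ((Fintype.card ι : ℝ) - (S.card : ℝ) + 1)) := by
  have hdiv : (∀ S : Finset ι, S.Nonempty → S ≠ univ → a ∈ S →
        ε ≤ (v univ - v S) / ((Fintype.card ι : ℝ) - #S + 1)) ↔
      ∀ S : Finset ι, S.Nonempty → S ≠ univ → a ∈ S →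
        v S + ε * (Fintype.card ι - #S + 1) ≤ v univ := by
    simp only [le_div_iff₀ (card_sub_card_add_one_pos _), le_sub_iff_add_le']
  have hmem := vetoAllocation_mem_epsCore_iff hveto hε
  refine ⟨⟨fun ⟨x, hx⟩ => hmem.2 fun S => add_mul_le_of_mem_epsCore hcard hveto hx,
    fun h => ⟨_, h⟩⟩, hmem.trans hdiv.symm⟩

/-- For a veto game with veto player `a` and `ε ≥ 0`, the following are equivalent:
(i) the strong ε-core is nonempty; (ii) the allocation with `x_i = ε` for `i ≠ a`
and `x_a = v(N) − ε(|N|−1)` is in the strong ε-core;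
(iii) `ε ≤ (v(N) − v(S))/(|N| − |S| + 1)` for every proper coalition `S` containing `a`. -/
theorem stmt3 {ι : Type*} [Fintype ι] [DecidableEq ι] (v : Finset ι → ℝ) (a : ι)
    (hcard : 2 ≤ Fintype.card ι)
    (hempty : v ∅ = 0)
    (hveto : ∀ S : Finset ι, a ∉ S → v S = 0)
    (ε : ℝ) (hε : 0 ≤ ε) :
    ((epsCore v ε).Nonempty ↔
      (fun i => if i = a then v Finset.univ - ε * ((Fintype.card ι : ℝ) - 1) else ε)
        ∈ epsCore v ε) ∧
    ((fun i => if i = a then v Finset.univ - ε * ((Fintype.card ι : ℝ) - 1) else ε)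
        ∈ epsCore v ε ↔
      ∀ S : Finset ι, S.Nonempty → S ≠ Finset.univ → a ∈ S →
        ε ≤ (v Finset.univ - v S) / ((Fintype.card ι : ℝ) - (S.card : ℝ) + 1)) :=
  stmt3_general v a hcard hveto ε hε
end

section
/- Let (N,v) be a balanced TU game with veto player a. Then the least core value ε* = max{ ε : C_ε ≠ ∅ } equals min{ (v(N) − v(S)) / (|N| − |S| + 1) : S proper coalition containing a }. -/
/-!
For `x` in the strong `ε`-core, the veto property makes every singleton `{i}` with `i ≠ a` worth
nothing, so `ε ≤ x i`. For a proper coalition `S ∋ a` the players outside `S` therefore receive at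
least `(|N| - |S|) ε`, while `S` receives at least `v(S) + ε`; adding up gives
`ε (|N| - |S| + 1) ≤ v(N) - v(S)`. Conversely, when `ε` is the minimum of these ratios (which is
`≥ 0` by balancedness), paying `ε` to every player other than `a` and the rest to `a` lies in the
strong `ε`-core.
-/

open Finset

noncomputable def lcv {ι : Type*} [Fintype ι] [DecidableEq ι] (v : Finset ι → ℝ) : ℝ :=
  sSup {ε : ℝ | (epsCore v ε).Nonempty}

def Pa {ι : Type*} [Fintype ι] [DecidableEq ι] (a : ι) : Finset (Finset ι) :=
  Finset.univ.filter (fun S => a ∈ S ∧ S ≠ Finset.univ)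

noncomputable def excessRatio {ι : Type*} [Fintype ι] [DecidableEq ι]
    (v : Finset ι → ℝ) (S : Finset ι) : ℝ :=
  (v Finset.univ - v S) / ((Fintype.card ι : ℝ) - (S.card : ℝ) + 1)

namespace VetoGame

variable {ι : Type*} [Fintype ι]

theorem card_sub_card_add_one_pos (S : Finset ι) :
    (0 : ℝ) < (Fintype.card ι : ℝ) - S.card + 1 := by
  have : (S.card : ℝ) ≤ Fintype.card ι := by exact_mod_cast S.card_le_univ
  linarith

variable [DecidableEq ι] {v : Finset ι → ℝ} {a : ι}

theorem mem_Pa {S : Finset ι} : S ∈ Pa a ↔ a ∈ S ∧ S ≠ univ := by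
  simp [Pa]

theorem le_excessRatio_iff {S : Finset ι} {ε : ℝ} :
    ε ≤ excessRatio v S ↔ ε * ((Fintype.card ι : ℝ) - S.card + 1) ≤ v univ - v S :=
  le_div_iff₀ (card_sub_card_add_one_pos S)

theorem le_apply_of_mem_epsCore (hveto : ∀ S : Finset ι, a ∉ S → v S = 0) {ε : ℝ}
    {x : ι → ℝ} (hx : x ∈ epsCore v ε) {i : ι} (hia : i ≠ a) : ε ≤ x i := by
  have haS : a ∉ ({i} : Finset ι) := by simpa using hia.symm
  have hproper : ({i} : Finset ι) ≠ univ := fun h => haS (h ▸ mem_univ a)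
  simpa [hveto _ haS] using hx.2 {i} (singleton_nonempty i) hproper

theorem le_excessRatio_of_mem_epsCore (hveto : ∀ S : Finset ι, a ∉ S → v S = 0) {ε : ℝ}
    {x : ι → ℝ} (hx : x ∈ epsCore v ε) {S : Finset ι} (hS : S ∈ Pa a) :
    ε ≤ excessRatio v S := by
  obtain ⟨haS, hSne⟩ := mem_Pa.1 hS
  have houtside : (Sᶜ.card : ℝ) * ε ≤ ∑ i ∈ Sᶜ, x i := by
    simpa using card_nsmul_le_sum Sᶜ x ε fun i hi =>
      le_apply_of_mem_epsCore hveto hx fun h => mem_compl.1 hi (h ▸ haS)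
  have hcompl : (Sᶜ.card : ℝ) = Fintype.card ι - S.card := by
    rw [card_compl, Nat.cast_sub S.card_le_univ]
  rw [hcompl] at houtside
  have hsplit := sum_add_sum_compl S x
  have hinside := hx.2 S ⟨a, haS⟩ hSne
  rw [le_excessRatio_iff]
  linarith [hx.1]

noncomputable def vetoAllocation (v : Finset ι → ℝ) (a : ι) (ε : ℝ) : ι → ℝ :=
  fun i => ε + if i = a then v univ - Fintype.card ι * ε else 0

theorem sum_vetoAllocation (ε : ℝ) (S : Finset ι) :
    ∑ i ∈ S, vetoAllocation v a ε i =
      S.card * ε + if a ∈ S then v univ - Fintype.card ι * ε else 0 := by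
  simp only [vetoAllocation, sum_add_distrib, sum_const, nsmul_eq_mul, sum_ite_eq']

theorem vetoAllocation_mem_epsCore (hveto : ∀ S : Finset ι, a ∉ S → v S = 0) {ε : ℝ}
    (hε : 0 ≤ ε) (hle : ∀ S ∈ Pa a, ε ≤ excessRatio v S) :
    vetoAllocation v a ε ∈ epsCore v ε := by
  refine ⟨by simp [sum_vetoAllocation], fun S hSne hS => ?_⟩
  rw [sum_vetoAllocation]
  by_cases haS : a ∈ S
  · have hratio := le_excessRatio_iff.1 (hle S (mem_Pa.2 ⟨haS, hS⟩))
    rw [if_pos haS]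
    linarith
  · have hcard : (1 : ℝ) ≤ S.card := by exact_mod_cast hSne.card_pos
    rw [if_neg haS, hveto S haS]
    nlinarith

end VetoGame

open VetoGame in
theorem stmt4_general {ι : Type*} [Fintype ι] [DecidableEq ι] (v : Finset ι → ℝ) (a : ι)
    (hveto : ∀ S : Finset ι, a ∉ S → v S = 0)
    (hbal : (epsCore v 0).Nonempty)
    (hPa : (Pa a).Nonempty) :
    lcv v = (Pa a).inf' hPa (excessRatio v) := by
  set ε := (Pa a).inf' hPa (excessRatio v)
  have hupper : ∀ ε' ∈ {ε' : ℝ | (epsCore v ε').Nonempty}, ε' ≤ ε := fun _ ⟨_, hx⟩ =>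
    le_inf' hPa _ fun _ hS => le_excessRatio_of_mem_epsCore hveto hx hS
  have hε : 0 ≤ ε := hupper 0 hbal
  have hattained : (epsCore v ε).Nonempty :=
    ⟨_, vetoAllocation_mem_epsCore hveto hε fun _ hS => inf'_le _ hS⟩
  exact IsGreatest.csSup_eq ⟨hattained, hupper⟩

/-- For a balanced veto game, the least core value equals
`min{ (v(N) − v(S))/(|N| − |S| + 1) : S proper coalition containing a }`. -/
theorem stmt4 {ι : Type*} [Fintype ι] [DecidableEq ι] (v : Finset ι → ℝ) (a : ι)
    (hcard : 2 ≤ Fintype.card ι)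
    (hempty : v ∅ = 0)
    (hveto : ∀ S : Finset ι, a ∉ S → v S = 0)
    (hbal : (epsCore v 0).Nonempty)
    (hPa : (Pa a).Nonempty) :
    lcv v = (Pa a).inf' hPa (excessRatio v) :=
  stmt4_general v a hveto hbal hPa
end

section
/- A TU game (N,v) with veto player a is totally balanced (every subgame has nonempty core) if and only if it is monotonic. -/
/-!
Core allocations dominate the singleton values, and in a veto game `v {i} = 0` for `i ≠ a`;
so with `v {a} = 0` every core allocation of a subgame on `T` is nonnegative, and then
`v S ≤ x(S) ≤ x(T) = v T` for `S ⊆ T`. Conversely, in a monotonic veto game the veto player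
can take everything: `v T` on the single coordinate `a` is a core allocation of the subgame on
`T` when `a ∈ T`, and `0` is one when `a ∉ T`.
-/

open Finset

namespace VetoGame

variable {ι : Type*} (v : Finset ι → ℝ)

def IsSubgameCore (T : Finset ι) (x : ι → ℝ) : Prop :=
  ∑ i ∈ T, x i = v T ∧ ∀ S ⊆ T, v S ≤ ∑ i ∈ S, x i

variable {v}

theorem IsSubgameCore.nonneg {T : Finset ι} {x : ι → ℝ} (hx : IsSubgameCore v T x)
    (hsingle : ∀ i ∈ T, 0 ≤ v {i}) {i : ι} (hi : i ∈ T) : 0 ≤ x i := by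
  simpa using (hsingle i hi).trans (hx.2 {i} (singleton_subset_iff.mpr hi))

theorem IsSubgameCore.le_of_subset {S T : Finset ι} {x : ι → ℝ} (hx : IsSubgameCore v T x)
    (hsingle : ∀ i ∈ T, 0 ≤ v {i}) (hST : S ⊆ T) : v S ≤ v T :=
  calc v S ≤ ∑ i ∈ S, x i := hx.2 S hST
    _ ≤ ∑ i ∈ T, x i :=
      sum_le_sum_of_subset_of_nonneg hST fun _ hi _ => hx.nonneg hsingle hi
    _ = v T := hx.1

variable {a : ι}

theorem singleton_nonneg (hveto : ∀ S : Finset ι, a ∉ S → v S = 0) (hva : v {a} = 0)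
    (i : ι) : 0 ≤ v {i} := by
  by_cases hi : i = a
  · rw [hi, hva]
  · rw [hveto {i} (by simpa using Ne.symm hi)]

theorem isSubgameCore_zero (hveto : ∀ S : Finset ι, a ∉ S → v S = 0) {T : Finset ι}
    (haT : a ∉ T) : IsSubgameCore v T 0 :=
  ⟨by simp [hveto T haT], fun S hS => by simp [hveto S fun haS => haT (hS haS)]⟩

theorem isSubgameCore_single [DecidableEq ι] (hveto : ∀ S : Finset ι, a ∉ S → v S = 0)
    (hmono : ∀ S T : Finset ι, S ⊆ T → v S ≤ v T)
    {T : Finset ι} (haT : a ∈ T) : IsSubgameCore v T (Pi.single a (v T)) := by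
  refine ⟨by simp [sum_pi_single', haT], fun S hS => ?_⟩
  rw [sum_pi_single']
  split_ifs with haS
  · exact hmono S T hS
  · exact (hveto S haS).le

end VetoGame

open VetoGame in
theorem stmt9_general {ι : Type*} [DecidableEq ι] (v : Finset ι → ℝ) (a : ι)
    (hveto : ∀ S : Finset ι, a ∉ S → v S = 0)
    (hva : v {a} = 0) :
    (∀ T : Finset ι, T.Nonempty →
        ∃ x : ι → ℝ, (∑ i ∈ T, x i) = v T ∧ ∀ S ⊆ T, v S ≤ ∑ i ∈ S, x i)
      ↔ (∀ S T : Finset ι, S ⊆ T → v S ≤ v T) := by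
  constructor
  · intro hcore S T hST
    rcases T.eq_empty_or_nonempty with rfl | hT
    · rw [subset_empty.mp hST]
    obtain ⟨x, hx⟩ := hcore T hT
    exact IsSubgameCore.le_of_subset hx (fun i _ => singleton_nonneg hveto hva i) hST
  · intro hmono T _
    by_cases haT : a ∈ T
    · exact ⟨_, isSubgameCore_single hveto hmono haT⟩
    · exact ⟨0, isSubgameCore_zero hveto haT⟩

/-- A veto game (with `v({a}) = 0`) is totally balanced (every subgame has a
nonempty core) if and only if it is monotonic. -/
theorem stmt9 {ι : Type*} [Fintype ι] [DecidableEq ι] (v : Finset ι → ℝ) (a : ι)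
    (hempty : v ∅ = 0)
    (hveto : ∀ S : Finset ι, a ∉ S → v S = 0)
    (hva : v {a} = 0) :
    (∀ T : Finset ι, T.Nonempty →
        ∃ x : ι → ℝ, (∑ i ∈ T, x i) = v T ∧ ∀ S ⊆ T, v S ≤ ∑ i ∈ S, x i)
      ↔ (∀ S T : Finset ι, S ⊆ T → v S ≤ v T) :=
  stmt9_general v a hveto hva
end

section
/- Let (N,v) be a TU game with veto player a. If the equal-split-among-users allocation (v(N)/(|N|−1) to each player other than a and 0 to a) belongs to the core, then the fully egalitarian allocation (v(N)/|N| to every player) also belongs to the core. -/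
/-!
A veto game has `v S = 0` off the veto player `a`, so the coalition `N \ {a}` forces `v N ≥ 0`
on the core allocation that pays `a` nothing. Coalitions without `a` are then covered by any
nonnegative allocation. A coalition `S ∋ a` gets `(|S| - 1) / (|N| - 1)` of `v N` from the
user split and `|S| / |N|` of it from the egalitarian split, and the first fraction is the smaller
one because `|S| ≤ |N|`.
-/

open Finset

/-- Membership in the core: efficiency plus the coalition constraints for all
nonempty proper coalitions. -/
def inCore {ι : Type*} [Fintype ι] [DecidableEq ι] (v : Finset ι → ℝ) (x : ι → ℝ) : Prop :=
  (∑ i, x i) = v Finset.univ ∧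
    ∀ S : Finset ι, S.Nonempty → S ≠ Finset.univ → v S ≤ ∑ i ∈ S, x i

theorem Finset.sum_ite_eq_zero_else_const {ι M : Type*} [DecidableEq ι] [AddCommMonoid M]
    (s : Finset ι) (a : ι) (c : M) :
    ∑ i ∈ s, (if i = a then 0 else c) = #(s.erase a) • c := by
  rw [sum_ite, sum_const_zero, zero_add, sum_const, filter_ne']

theorem sub_one_div_sub_one_le_div {K : Type*} [Field K] [LinearOrder K] [IsStrictOrderedRing K]
    {k n : K} (hkn : k ≤ n) (hn : 1 < n) : (k - 1) / (n - 1) ≤ k / n := by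
  rw [div_le_div_iff₀ (by linarith) (by linarith)]
  linarith

theorem inCore.zero_le_of_veto {ι : Type*} [Fintype ι] [DecidableEq ι] [Nontrivial ι]
    {v : Finset ι → ℝ} {x : ι → ℝ} {a : ι} (hx : inCore v x) (hxa : x a = 0)
    (hveto : ∀ S : Finset ι, a ∉ S → v S = 0) : 0 ≤ v univ := by
  have hne : (univ.erase a).Nonempty := univ_nontrivial.erase_nonempty
  have hproper : univ.erase a ≠ univ := fun h => erase_eq_self.mp h (mem_univ a)
  have h := hx.2 _ hne hproper
  rwa [hveto _ (notMem_erase a _), sum_erase_eq_sub (mem_univ a), hx.1, hxa, sub_zero] at h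

theorem stmt10_general {ι : Type*} [Fintype ι] [DecidableEq ι] (v : Finset ι → ℝ) (a : ι)
    (hcard : 2 ≤ Fintype.card ι)
    (hveto : ∀ S : Finset ι, a ∉ S → v S = 0)
    (hua : inCore v (fun i => if i = a then 0 else v Finset.univ / ((Fintype.card ι : ℝ) - 1))) :
    inCore v (fun _ => v Finset.univ / (Fintype.card ι : ℝ)) := by
  have : Nontrivial ι := Fintype.one_lt_card_iff_nontrivial.mp hcard
  have hn : (1 : ℝ) < Fintype.card ι := by exact_mod_cast hcard
  have hM : 0 ≤ v univ := hua.zero_le_of_veto (if_pos rfl) hveto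
  refine ⟨?_, fun S hS hSne => ?_⟩
  · rw [sum_const, card_univ, nsmul_eq_mul, mul_div_cancel₀ _ (by positivity)]
  rw [sum_const, nsmul_eq_mul]
  by_cases haS : a ∈ S
  · calc v S ≤ _ := hua.2 S hS hSne
      _ = v univ * ((#S - 1) / (Fintype.card ι - 1)) := by
        rw [sum_ite_eq_zero_else_const, card_erase_of_mem haS, nsmul_eq_mul,
          Nat.cast_pred (card_pos.mpr hS)]
        ring
      _ ≤ v univ * (#S / Fintype.card ι) := mul_le_mul_of_nonneg_left
        (sub_one_div_sub_one_le_div (Nat.cast_le.mpr (card_le_univ S)) hn) hM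
      _ = #S * (v univ / Fintype.card ι) := by ring
  · rw [hveto S haS]
    exact mul_nonneg (Nat.cast_nonneg _) (div_nonneg hM (Nat.cast_nonneg _))

/-- For a veto game, if the equal-split-among-users allocation
(`v(N)/(|N|−1)` to each player other than `a`, `0` to `a`) is in the core,
then the fully egalitarian allocation (`v(N)/|N|` to every player) is in the core. -/
theorem stmt10 {ι : Type*} [Fintype ι] [DecidableEq ι] (v : Finset ι → ℝ) (a : ι)
    (hcard : 2 ≤ Fintype.card ι)
    (hempty : v ∅ = 0)
    (hveto : ∀ S : Finset ι, a ∉ S → v S = 0)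
    (hua : inCore v (fun i => if i = a then 0 else v Finset.univ / ((Fintype.card ι : ℝ) - 1))) :
    inCore v (fun _ => v Finset.univ / (Fintype.card ι : ℝ)) :=
  stmt10_general v a hcard hveto hua
end

section
/- Let (N,v) be a TU game with veto player a such that the least core value ε* equals ε̂ := min{ (v(N)−v(S))/(|N|−|S|+1) : S proper, a ∈ S }. Let R be the set of minimizers and S_min the intersection of all coalitions in R. Then every allocation x in the least core C_{ε*} satisfies x_i = ε* for every player i ∉ S_min. -/
open Finset
open scoped Classical

/-! Pick a minimizer `T` of the ratio with `i ∉ T`. Every player other than the veto player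
gets at least `ε*` in the `ε*`-core, since his singleton is worth `0`. As the ratio of `T` is `ε*`,
the players outside `T` share at most `v(N) − v(T) − ε* = (|N| − |T|) ε*`; the `|N| − |T| − 1` of
them other than `i` take at least `ε*` each, which leaves `x i ≤ ε*`. -/

lemma Finset.apply_add_card_erase_nsmul_le_sum {α M : Type*} [DecidableEq α]
    [AddCommMonoid M] [PartialOrder M] [IsOrderedAddMonoid M]
    {s : Finset α} {f : α → M} {c : M} {i : α} (hi : i ∈ s) (hc : ∀ j ∈ s, c ≤ f j) :
    f i + #(s.erase i) • c ≤ ∑ j ∈ s, f j := by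
  rw [← add_sum_erase s f hi]
  gcongr
  exact card_nsmul_le_sum _ _ _ fun j hj => hc j (mem_of_mem_erase hj)

lemma Finset.mem_inf_id_of_forall_mem {α : Type*} [Fintype α] [DecidableEq α]
    {R : Finset (Finset α)} {i : α} (h : ∀ T ∈ R, i ∈ T) : i ∈ R.inf id :=
  singleton_subset_iff.mp (Finset.le_inf fun T hT => singleton_subset_iff.mpr (h T hT))

section

variable {ι : Type*} [Fintype ι] [DecidableEq ι] {v : Finset ι → ℝ} {ε : ℝ} {x : ι → ℝ}

lemma sum_compl_le_of_mem_epsCore (hx : x ∈ epsCore v ε) {T : Finset ι}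
    (hT : T.Nonempty) (hTu : T ≠ univ) : ∑ j ∈ Tᶜ, x j ≤ v univ - v T - ε := by
  have hsplit := sum_add_sum_compl T x
  linarith [hx.1, hx.2 T hT hTu]

lemma le_apply_of_mem_epsCore_of_veto {a : ι} (hveto : ∀ S : Finset ι, a ∉ S → v S = 0)
    (hx : x ∈ epsCore v ε) {j : ι} (hj : j ≠ a) : ε ≤ x j := by
  have ha : a ∉ ({j} : Finset ι) := by simpa using hj.symm
  have hju : ({j} : Finset ι) ≠ univ := fun h => ha (h ▸ mem_univ a)
  simpa [hveto _ ha] using hx.2 {j} (singleton_nonempty j) hju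

lemma apply_le_of_mem_epsCore_of_veto {a : ι} (hveto : ∀ S : Finset ι, a ∉ S → v S = 0)
    (hx : x ∈ epsCore v ε) {T : Finset ι} (haT : a ∈ T) (hTu : T ≠ univ)
    {i : ι} (hiT : i ∉ T) :
    x i + ((Fintype.card ι : ℝ) - #T - 1) * ε ≤ v univ - v T - ε := by
  have hi : i ∈ Tᶜ := mem_compl.mpr hiT
  have hcard : (#(Tᶜ.erase i) : ℝ) = (Fintype.card ι : ℝ) - #T - 1 := by
    rw [card_erase_of_mem hi, Nat.cast_sub (card_pos.mpr ⟨i, hi⟩), card_compl,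
      Nat.cast_sub (card_le_univ T)]
    push_cast
    ring
  have hlow := Finset.apply_add_card_erase_nsmul_le_sum hi fun j hj =>
    le_apply_of_mem_epsCore_of_veto hveto hx (ne_of_mem_of_not_mem haT (mem_compl.mp hj)).symm
  rw [nsmul_eq_mul, hcard] at hlow
  linarith [sum_compl_le_of_mem_epsCore hx ⟨a, haT⟩ hTu]

lemma sub_eq_mul_of_excessRatio_eq {T : Finset ι} (hTu : T ≠ univ) (h : excessRatio v T = ε) :
    v univ - v T = ((Fintype.card ι : ℝ) - #T + 1) * ε := by
  have hlt : (#T : ℝ) < Fintype.card ι := by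
    exact_mod_cast (card_lt_iff_ne_univ T).mpr hTu
  rw [excessRatio, div_eq_iff (by linarith)] at h
  linarith

end

theorem stmt12_general {ι : Type*} [Fintype ι] [DecidableEq ι] (v : Finset ι → ℝ) (a : ι)
    (hveto : ∀ S : Finset ι, a ∉ S → v S = 0)
    (hPa : (Pa a).Nonempty)
    (hstar : lcv v = (Pa a).inf' hPa (excessRatio v)) :
    ∀ x ∈ epsCore v (lcv v), ∀ i : ι,
      i ∉ ((Pa a).filter
        (fun S => excessRatio v S = (Pa a).inf' hPa (excessRatio v))).inf id →
      x i = lcv v := by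
  intro x hx i hi
  set R := (Pa a).filter fun S => excessRatio v S = (Pa a).inf' hPa (excessRatio v)
  have hia : i ≠ a := by
    rintro rfl
    exact hi (mem_inf_id_of_forall_mem fun T hT => (mem_filter.mp (mem_filter.mp hT).1).2.1)
  obtain ⟨T, hTR, hiT⟩ : ∃ T ∈ R, i ∉ T := by
    by_contra! h
    exact hi (mem_inf_id_of_forall_mem h)
  obtain ⟨hTPa, hTmin⟩ := mem_filter.mp hTR
  obtain ⟨haT, hTu⟩ := (mem_filter.mp hTPa).2
  have hval := sub_eq_mul_of_excessRatio_eq hTu (hTmin.trans hstar.symm)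
  have hupper := apply_le_of_mem_epsCore_of_veto hveto hx haT hTu hiT
  have hlower := le_apply_of_mem_epsCore_of_veto hveto hx hia
  linarith

/-- Suppose the least core value `ε*` of a veto game equals
`ε̂ = min{(v(N)−v(S))/(|N|−|S|+1) : S proper, a ∈ S}`. Let `R` be the set of
minimizers and `S_min` the intersection of all coalitions in `R`. Then every
allocation in the least core gives exactly `ε*` to every player outside `S_min`. -/
theorem stmt12 {ι : Type*} [Fintype ι] [DecidableEq ι] (v : Finset ι → ℝ) (a : ι)
    (hempty : v ∅ = 0)
    (hveto : ∀ S : Finset ι, a ∉ S → v S = 0)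
    (hPa : (Pa a).Nonempty)
    (hstar : lcv v = (Pa a).inf' hPa (excessRatio v)) :
    ∀ x ∈ epsCore v (lcv v), ∀ i : ι,
      i ∉ ((Pa a).filter
        (fun S => excessRatio v S = (Pa a).inf' hPa (excessRatio v))).inf id →
      x i = lcv v :=
  stmt12_general v a hveto hPa hstar
end

section
/- Consider the simple energy sharing game with producers U_1, consumers U_2, |U_1| ≥ 2 and |U_2| ≥ 2, capacities p_i > 0 (i ∈ U_1), q_j > 0 (j ∈ U_2), zero admission fees, and characteristic function v(S) = min( Σ_{i∈S∩U_1} p_i, Σ_{j∈S∩U_2} q_j ) for proper coalitions S containing the aggregator a with |S∩U| ≥ 2, and v(S)=0 otherwise. If Σ_{j∈U_2} q_j < Σ_{i∈U_1} p_i, then the game is a big-boss game with big boss a if and only if Σ_{j∈U_2} q_j ≤ Σ_{i∈U_1\{k}} p_i for every k ∈ U_1. -/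
/-!
With zero fees the grand coalition is worth `Q = Σ_{U₂} q`, a consumer `j` contributes exactly
`q_j` to it, and a producer `k` contributes `max 0 (Q - Σ_{U₁ \ {k}} p)`. If every producer is
dispensable, only consumers have positive marginal contributions, and these add up to
`Σ_{U₂ \ S} q ≤ v(N) - v(S)`. If some producer `k` is indispensable, remove `k` together with a
consumer `j`: then `v(N) - v(S)` is the larger of the two (positive) marginal contributions, hence
strictly less than their sum.
-/

open Finset

namespace EnergySharing

section Value

variable {ι : Type*} [DecidableEq ι]

def value (U1 U2 : Finset ι) (a : ι) (p q : ι → ℝ) (S : Finset ι) : ℝ :=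
  if a ∈ S ∧ 2 ≤ (S ∩ (U1 ∪ U2)).card
    then min (∑ i ∈ S ∩ U1, p i) (∑ j ∈ S ∩ U2, q j) else 0

variable {U1 U2 : Finset ι} {a : ι} {p q : ι → ℝ}

lemma value_le_sum_inter (hq : ∀ j ∈ U2, 0 ≤ q j) (S : Finset ι) :
    value U1 U2 a p q S ≤ ∑ j ∈ S ∩ U2, q j := by
  unfold value
  split_ifs
  · exact min_le_right _ _
  · exact sum_nonneg fun j hj => hq j (mem_inter.mp hj).2

variable [Fintype ι]

lemma value_univ_sdiff {T : Finset ι} (haT : a ∉ T) (hT : T.card + 2 ≤ (U1 ∪ U2).card) :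
    value U1 U2 a p q (univ \ T) = min (∑ i ∈ U1 \ T, p i) (∑ j ∈ U2 \ T, q j) := by
  have hinter : ∀ X : Finset ι, (univ \ T) ∩ X = X \ T := fun X => by ext; simp [and_comm]
  have hcard : 2 ≤ ((U1 ∪ U2) \ T).card := by
    have := le_card_sdiff T (U1 ∪ U2)
    omega
  rw [value, if_pos ⟨by simpa using haT, by rwa [hinter]⟩, hinter, hinter]

lemma value_univ (hU : 2 ≤ (U1 ∪ U2).card) (hle : ∑ j ∈ U2, q j ≤ ∑ i ∈ U1, p i) :
    value U1 U2 a p q univ = ∑ j ∈ U2, q j := by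
  have h := value_univ_sdiff (U1 := U1) (p := p) (q := q) (notMem_empty a) (by simpa using hU)
  rwa [sdiff_empty, sdiff_empty, sdiff_empty, min_eq_right hle] at h

lemma value_univ_erase {i : ι} (hia : i ≠ a) (hU : 3 ≤ (U1 ∪ U2).card) :
    value U1 U2 a p q (univ.erase i) = min (∑ k ∈ U1.erase i, p k) (∑ j ∈ U2.erase i, q j) := by
  simpa only [sdiff_singleton_eq_erase] using
    value_univ_sdiff (U1 := U1) (p := p) (q := q) (T := {i}) (by simpa using hia.symm)
      (by simpa using hU)

lemma value_univ_sub_value_erase_of_mem_right (hdisj : Disjoint U1 U2)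
    (hU : 3 ≤ (U1 ∪ U2).card) (hle : ∑ j ∈ U2, q j ≤ ∑ i ∈ U1, p i) {j : ι} (hj : j ∈ U2)
    (hja : j ≠ a) (hqj : 0 ≤ q j) :
    value U1 U2 a p q univ - value U1 U2 a p q (univ.erase j) = q j := by
  rw [value_univ (by omega) hle, value_univ_erase hja hU,
    erase_eq_of_notMem (disjoint_right.mp hdisj hj), sum_erase_eq_sub hj,
    min_eq_right (by linarith)]
  ring

lemma value_univ_sub_value_erase_of_notMem_right (hU : 3 ≤ (U1 ∪ U2).card)
    (hle : ∑ j ∈ U2, q j ≤ ∑ i ∈ U1, p i) (hcond : ∀ k ∈ U1, ∑ j ∈ U2, q j ≤ ∑ i ∈ U1.erase k, p i)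
    {i : ι} (hia : i ≠ a) (hi : i ∉ U2) :
    value U1 U2 a p q univ - value U1 U2 a p q (univ.erase i) = 0 := by
  have hQ : ∑ j ∈ U2, q j ≤ ∑ k ∈ U1.erase i, p k := by
    by_cases hi1 : i ∈ U1
    · exact hcond i hi1
    · rw [erase_eq_of_notMem hi1]; exact hle
  rw [value_univ (by omega) hle, value_univ_erase hia hU, erase_eq_of_notMem hi,
    min_eq_right hQ, sub_self]

end Value

lemma sub_min_lt_sub_add_sub {α : Type*} [AddCommGroup α] [LinearOrder α] [IsOrderedAddMonoid α]
    {c x y : α} (hx : x < c) (hy : y < c) : c - min x y < (c - x) + (c - y) := by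
  rcases min_choice x y with h | h <;> rw [h]
  · exact lt_add_of_pos_right _ (sub_pos.mpr hy)
  · exact lt_add_of_pos_left _ (sub_pos.mpr hx)

section BigBoss

variable {ι : Type*} [Fintype ι] [DecidableEq ι]

/-- The inequality part of the big-boss property; monotonicity and the veto property hold for every
simple energy sharing game. -/
def BigBossCondition (v : Finset ι → ℝ) (a : ι) : Prop :=
  ∀ S : Finset ι, a ∈ S → ∑ i ∈ univ \ S, (v univ - v (univ.erase i)) ≤ v univ - v S

variable {U1 U2 : Finset ι} {a : ι} {p q : ι → ℝ}

theorem bigBossCondition_value (hdisj : Disjoint U1 U2)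
    (hU : 3 ≤ (U1 ∪ U2).card) (hq : ∀ j ∈ U2, 0 ≤ q j) (hle : ∑ j ∈ U2, q j ≤ ∑ i ∈ U1, p i)
    (hcond : ∀ k ∈ U1, ∑ j ∈ U2, q j ≤ ∑ i ∈ U1.erase k, p i) :
    BigBossCondition (value U1 U2 a p q) a := by
  intro S haS
  have hmarginal : ∀ i ∈ univ \ S, value U1 U2 a p q univ - value U1 U2 a p q (univ.erase i)
      = if i ∈ U2 then q i else 0 := by
    intro i hi
    have hia : i ≠ a := by rintro rfl; exact (mem_sdiff.mp hi).2 haS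
    split_ifs with hi2
    · exact value_univ_sub_value_erase_of_mem_right hdisj hU hle hi2 hia (hq i hi2)
    · exact value_univ_sub_value_erase_of_notMem_right hU hle hcond hia hi2
  calc ∑ i ∈ univ \ S, (value U1 U2 a p q univ - value U1 U2 a p q (univ.erase i))
      = ∑ j ∈ U2 \ S, q j := by
        rw [sum_congr rfl hmarginal, sum_ite_mem]
        congr 1; ext; simp [and_comm]
    _ = ∑ j ∈ U2, q j - ∑ j ∈ S ∩ U2, q j := by
        rw [← sum_inter_add_sum_sdiff U2 S, inter_comm]; ring
    _ ≤ value U1 U2 a p q univ - value U1 U2 a p q S := by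
        rw [value_univ (by omega) hle]
        exact sub_le_sub_left (value_le_sum_inter hq S) _

theorem not_bigBossCondition_value (hdisj : Disjoint U1 U2) (haU : a ∉ U1 ∪ U2)
    (hU : 4 ≤ (U1 ∪ U2).card) (hle : ∑ j ∈ U2, q j ≤ ∑ i ∈ U1, p i) {k j : ι} (hk : k ∈ U1)
    (hj : j ∈ U2) (hqj : 0 < q j) (hkQ : ∑ i ∈ U1.erase k, p i < ∑ j ∈ U2, q j) :
    ¬ BigBossCondition (value U1 U2 a p q) a := by
  intro H
  have hkU2 : k ∉ U2 := disjoint_left.mp hdisj hk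
  have hjU1 : j ∉ U1 := disjoint_right.mp hdisj hj
  have hkj : k ≠ j := by rintro rfl; exact hkU2 hj
  have hka : k ≠ a := by rintro rfl; exact haU (mem_union_left _ hk)
  have hja : j ≠ a := by rintro rfl; exact haU (mem_union_right _ hj)
  have haT : a ∉ ({k, j} : Finset ι) := by simp [hka.symm, hja.symm]
  have hmarginal_k : value U1 U2 a p q univ - value U1 U2 a p q (univ.erase k)
      = ∑ j ∈ U2, q j - ∑ i ∈ U1.erase k, p i := by
    rw [value_univ (by omega) hle, value_univ_erase hka (by omega),
      erase_eq_of_notMem hkU2, min_eq_left hkQ.le]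
  have hvS : value U1 U2 a p q (univ \ {k, j})
      = min (∑ i ∈ U1.erase k, p i) (∑ j ∈ U2, q j - q j) := by
    have hU1 : U1 \ {k, j} = U1.erase k := by ext; grind
    have hU2 : U2 \ {k, j} = U2.erase j := by ext; grind
    rw [value_univ_sdiff haT (by have := card_le_two (a := k) (b := j); omega), hU1, hU2,
      sum_erase_eq_sub hj]
  have hviolation := H (univ \ {k, j}) (by simpa using haT)
  rw [Finset.sdiff_sdiff_eq_self (subset_univ _), sum_pair hkj, hmarginal_k,
    value_univ_sub_value_erase_of_mem_right hdisj (by omega) hle hj hja hqj.le, hvS,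
    value_univ (by omega) hle] at hviolation
  have := sub_min_lt_sub_add_sub hkQ (sub_lt_self _ hqj)
  linarith

end BigBoss

end EnergySharing

theorem stmt16_general {ι : Type*} [Fintype ι] [DecidableEq ι]
    (U1 U2 : Finset ι) (a : ι) (p q : ι → ℝ) (v : Finset ι → ℝ)
    (hdisj : Disjoint U1 U2) (haU : a ∉ U1 ∪ U2)
    (hU1 : 2 ≤ U1.card) (hU2 : 2 ≤ U2.card)
    (hq : ∀ j ∈ U2, 0 < q j)
    (hv : ∀ S : Finset ι,
      v S = if a ∈ S ∧ 2 ≤ (S ∩ (U1 ∪ U2)).card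
        then min (∑ i ∈ S ∩ U1, p i) (∑ j ∈ S ∩ U2, q j) else 0)
    (hlt : ∑ j ∈ U2, q j < ∑ i ∈ U1, p i) :
    (∀ S : Finset ι, a ∈ S →
        (∑ i ∈ Finset.univ \ S, (v Finset.univ - v (Finset.univ.erase i))) ≤
          v Finset.univ - v S)
      ↔ ∀ k ∈ U1, ∑ j ∈ U2, q j ≤ ∑ i ∈ U1.erase k, p i := by
  obtain rfl : v = EnergySharing.value U1 U2 a p q := funext hv
  have hU : 4 ≤ (U1 ∪ U2).card := by rw [card_union_of_disjoint hdisj]; omega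
  refine ⟨fun H k hk => not_lt.mp fun hkQ => ?_, EnergySharing.bigBossCondition_value hdisj
    (by omega) (fun j hj => (hq j hj).le) hlt.le⟩
  obtain ⟨j, hj⟩ := card_pos.mp (by omega : 0 < U2.card)
  exact EnergySharing.not_bigBossCondition_value hdisj haU hU hlt.le hk hj (hq j hj) hkQ H

/-- In the simple energy sharing game with zero admission fees, producers `U₁`,
consumers `U₂` (each with at least two members), if `Σ q < Σ p`, then the
big-boss condition for `a` (`v(N) − v(S) ≥ Σ_{i∈N\S} (v(N) − v(N\{i}))` for all
`S ∋ a`) holds if and only if `Σ_{j∈U₂} q_j ≤ Σ_{i∈U₁\{k}} p_i` for every `k ∈ U₁`. -/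
theorem stmt16 {ι : Type*} [Fintype ι] [DecidableEq ι]
    (U1 U2 : Finset ι) (a : ι) (p q : ι → ℝ) (v : Finset ι → ℝ)
    (hdisj : Disjoint U1 U2) (haU : a ∉ U1 ∪ U2)
    (hunion : Finset.univ = insert a (U1 ∪ U2))
    (hU1 : 2 ≤ U1.card) (hU2 : 2 ≤ U2.card)
    (hp : ∀ i ∈ U1, 0 < p i) (hq : ∀ j ∈ U2, 0 < q j)
    (hv : ∀ S : Finset ι,
      v S = if a ∈ S ∧ 2 ≤ (S ∩ (U1 ∪ U2)).card
        then min (∑ i ∈ S ∩ U1, p i) (∑ j ∈ S ∩ U2, q j) else 0)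
    (hlt : ∑ j ∈ U2, q j < ∑ i ∈ U1, p i) :
    (∀ S : Finset ι, a ∈ S →
        (∑ i ∈ Finset.univ \ S, (v Finset.univ - v (Finset.univ.erase i))) ≤
          v Finset.univ - v S)
      ↔ ∀ k ∈ U1, ∑ j ∈ U2, q j ≤ ∑ i ∈ U1.erase k, p i :=
  stmt16_general U1 U2 a p q v hdisj haU hU1 hU2 hq hv hlt
end

section
/- In the simple energy sharing game with a single producer u_1 (U_1 = {u_1}), consumers U_2, zero fees on consumers, fee c_1 ≤ min(p_1, min_j q_j) on the producer, and v(S) = min(p_1, Σ_{j∈S∩U_2} q_j) − c_1 for coalitions S containing both a and u_1 with S∩U_2 ≠ ∅, v(S)=0 if a ∉ S or u_1 ∉ S, and v({a,u_1}) = −c_1, the game is a clan game with clan {a, u_1}: for every S containing {a, u_1}, v(N) − v(S) ≥ Σ_{i∈N\S} (v(N) − v(N\{i})). -/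
open Finset

private lemma key17 (p b b' x : ℝ) (hx : 0 ≤ x) (hb : b' ≤ b) :
    min p b - min p (b - x) ≤ min p b' - min p (b' - x) := by
  rcases min_cases p b with ⟨h1, h1'⟩ | ⟨h1, h1'⟩ <;>
  rcases min_cases p (b - x) with ⟨h2, h2'⟩ | ⟨h2, h2'⟩ <;>
  rcases min_cases p b' with ⟨h3, h3'⟩ | ⟨h3, h3'⟩ <;>
  rcases min_cases p (b' - x) with ⟨h4, h4'⟩ | ⟨h4, h4'⟩ <;>
  linarith

private lemma sup17 {ι : Type*} [DecidableEq ι] (p T : ℝ) (q : ι → ℝ)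
    (D : Finset ι) (hq : ∀ i ∈ D, 0 ≤ q i) :
    ∑ i ∈ D, (min p T - min p (T - q i)) ≤ min p T - min p (T - ∑ i ∈ D, q i) := by
  induction D using Finset.induction with
  | empty => simp
  | @insert x s hx ih =>
    rw [Finset.sum_insert hx, Finset.sum_insert hx]
    have hs : 0 ≤ ∑ i ∈ s, q i :=
      Finset.sum_nonneg fun i hi => hq i (Finset.mem_insert_of_mem hi)
    have h1 : min p T - min p (T - q x) ≤
        min p (T - ∑ i ∈ s, q i) - min p (T - ∑ i ∈ s, q i - q x) :=
      key17 p T (T - ∑ i ∈ s, q i) (q x) (hq x (Finset.mem_insert_self x s))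
        (by linarith)
    have h2 := ih (fun i hi => hq i (Finset.mem_insert_of_mem hi))
    have : T - ∑ i ∈ s, q i - q x = T - (q x + ∑ i ∈ s, q i) := by ring
    rw [this] at h1
    linarith

/-- The simple energy sharing game with a single producer `u₁`, consumers `U₂`,
zero fees on consumers and fee `c₁ ≤ min(p₁, min_j q_j)` on the producer, is a
clan game with clan `{a, u₁}`: for every coalition `S ⊇ {a, u₁}`,
`v(N) − v(S) ≥ Σ_{i∈N\S} (v(N) − v(N\{i}))`. -/
theorem stmt17 {ι : Type*} [Fintype ι] [DecidableEq ι]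
    (a u1 : ι) (hau : a ≠ u1) (U2 : Finset ι) (haU2 : a ∉ U2) (hu1U2 : u1 ∉ U2)
    (hunion : Finset.univ = insert a (insert u1 U2)) (hU2 : U2.Nonempty)
    (p1 c1 : ℝ) (q : ι → ℝ)
    (hp1 : 0 < p1) (hq : ∀ j ∈ U2, 0 < q j)
    (hc0 : 0 ≤ c1) (hc1p : c1 ≤ p1) (hc1q : ∀ j ∈ U2, c1 ≤ q j)
    (v : Finset ι → ℝ)
    (hv : ∀ S : Finset ι,
      v S = if a ∈ S ∧ u1 ∈ S then min p1 (∑ j ∈ S ∩ U2, q j) - c1 else 0) :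
    ∀ S : Finset ι, a ∈ S → u1 ∈ S →
      (∑ i ∈ Finset.univ \ S, (v Finset.univ - v (Finset.univ.erase i))) ≤
        v Finset.univ - v S := by
  intro S haS hu1S
  set T : ℝ := ∑ j ∈ U2, q j with hT
  have hUinter : (Finset.univ : Finset ι) ∩ U2 = U2 := Finset.univ_inter U2
  have hvN : v Finset.univ = min p1 T - c1 := by
    rw [hv]; simp [hUinter, hT]
  have hvS : v S = min p1 (∑ j ∈ S ∩ U2, q j) - c1 := by
    rw [hv]; simp [haS, hu1S]
  -- univ \ S = U2 \ S
  have hdiff : Finset.univ \ S = U2 \ S := by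
    ext i
    simp only [Finset.mem_sdiff, Finset.mem_univ, true_and]
    constructor
    · intro hiS
      refine ⟨?_, hiS⟩
      have : i ∈ insert a (insert u1 U2) := by rw [← hunion]; exact Finset.mem_univ i
      rcases Finset.mem_insert.mp this with h | h
      · exact absurd (h ▸ haS) hiS
      rcases Finset.mem_insert.mp h with h' | h'
      · exact absurd (h' ▸ hu1S) hiS
      · exact h'
    · exact fun h => h.2
  have hsubU2 : ∀ i ∈ Finset.univ \ S, i ∈ U2 := by
    intro i hi; rw [hdiff] at hi; exact (Finset.mem_sdiff.mp hi).1
  have herase : ∀ i ∈ Finset.univ \ S,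
      v (Finset.univ.erase i) = min p1 (T - q i) - c1 := by
    intro i hi
    have hiU2 := hsubU2 i hi
    have hia : i ≠ a := fun h => haU2 (h ▸ hiU2)
    have hiu1 : i ≠ u1 := fun h => hu1U2 (h ▸ hiU2)
    rw [hv]
    have ha' : a ∈ Finset.univ.erase i := Finset.mem_erase.mpr ⟨hia.symm, Finset.mem_univ a⟩
    have hu' : u1 ∈ Finset.univ.erase i := Finset.mem_erase.mpr ⟨hiu1.symm, Finset.mem_univ u1⟩
    have hinter : (Finset.univ.erase i) ∩ U2 = U2.erase i := by
      ext x
      simp only [Finset.mem_inter, Finset.mem_erase, Finset.mem_univ, true_and]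
      tauto
    rw [if_pos ⟨ha', hu'⟩, hinter, Finset.sum_erase_eq_sub hiU2]
  -- the sum split
  have hsplit : (∑ j ∈ S ∩ U2, q j) = T - ∑ i ∈ Finset.univ \ S, q i := by
    rw [hdiff, hT, Finset.inter_comm]
    have := Finset.sum_inter_add_sum_sdiff U2 S q
    linarith
  calc ∑ i ∈ Finset.univ \ S, (v Finset.univ - v (Finset.univ.erase i))
      = ∑ i ∈ Finset.univ \ S, (min p1 T - min p1 (T - q i)) := by
        apply Finset.sum_congr rfl
        intro i hi
        rw [hvN, herase i hi]
        ring
    _ ≤ min p1 T - min p1 (T - ∑ i ∈ Finset.univ \ S, q i) :=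
        sup17 p1 T q _ (fun i hi => (hq i (hsubU2 i hi)).le)
    _ = (min p1 T - c1) - (min p1 (T - ∑ i ∈ Finset.univ \ S, q i) - c1) := by ring
    _ = v Finset.univ - v S := by rw [hvN, hvS, hsplit]
end

section
/- Let (N,v) be a TU game with veto player a and empty core (so ε* < 0). Suppose ε* = ε̂ := min{ (v(N)−v(S))/(|N|−|S|+1) : S proper, a ∈ S } is attained at Ŝ. Then |Ŝ| = |N|−1, and the unique player k ∉ Ŝ satisfies: v(N) ≥ v(S) + ε̂ for every proper S with a ∈ S and k ∈ S, and v(N) ≥ v(S) + 2ε̂ for every proper S with a ∈ S and k ∉ S. -/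
open Finset

/-!
If `x` lies in the ε-core of a game with veto player `a` and `S ∋ a` is proper, then `Sᶜ` is
worth `0` but still claims `ε`, so `v(S) + 2ε ≤ v(N)`; hence `v(S) + 2ε* ≤ v(N)`. At `Ŝ` we have
`v(N) - v(Ŝ) = ε̂ (|N| - |Ŝ| + 1)` with `ε̂ < 0` (otherwise giving `v(N)` to `a` is a core
allocation), which forces `|N| - |Ŝ| + 1 ≤ 2`, so `Ŝ = N \ {k}` and `v(N) - v(Ŝ) = 2ε̂`.
For `k ∈ S`, splitting `x(S) = x(S \ {k}) + x_k` and bounding `x_k` by the constraint for `Ŝ`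
sharpens the estimate to `v(S) + 3ε ≤ 2v(N) - v(Ŝ) = v(N) + 2ε̂`, and `ε = ε* = ε̂` gives the
claim.
-/

namespace TUGame

variable {ι : Type*} [Fintype ι]

theorem excessRatio_denom_pos (S : Finset ι) :
    0 < (Fintype.card ι : ℝ) - S.card + 1 := by
  have : (S.card : ℝ) ≤ Fintype.card ι := by exact_mod_cast S.card_le_univ
  linarith

variable [DecidableEq ι] {v : Finset ι → ℝ} {a : ι}

theorem mem_Pa {S : Finset ι} : S ∈ Pa a ↔ a ∈ S ∧ S ≠ univ := by
  simp [Pa]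

theorem excessRatio_mul_denom (v : Finset ι → ℝ) (S : Finset ι) :
    excessRatio v S * ((Fintype.card ι : ℝ) - S.card + 1) = v univ - v S :=
  div_mul_cancel₀ _ (excessRatio_denom_pos S).ne'

theorem excessRatio_nonneg_iff {S : Finset ι} : 0 ≤ excessRatio v S ↔ v S ≤ v univ := by
  rw [excessRatio, le_div_iff₀ (excessRatio_denom_pos S), zero_mul, sub_nonneg]

theorem single_mem_epsCore_zero (hveto : ∀ S : Finset ι, a ∉ S → v S = 0)
    (hle : ∀ S : Finset ι, a ∈ S → S ≠ univ → v S ≤ v univ) :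
    Pi.single a (v univ) ∈ epsCore v 0 := by
  refine ⟨by simp, fun S _ hS => ?_⟩
  rw [sum_pi_single', add_zero]
  split_ifs with haS
  · exact hle S haS hS
  · exact (hveto S haS).le

theorem inf'_excessRatio_neg (hveto : ∀ S : Finset ι, a ∉ S → v S = 0)
    (hcore : ¬ (epsCore v 0).Nonempty) (hPa : (Pa a).Nonempty) :
    (Pa a).inf' hPa (excessRatio v) < 0 := by
  by_contra! h
  refine hcore ⟨_, single_mem_epsCore_zero hveto fun S haS hS => ?_⟩
  exact excessRatio_nonneg_iff.mp (h.trans (inf'_le _ (mem_Pa.mpr ⟨haS, hS⟩)))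

/-- The complement of `S` is worth nothing but still claims `ε`. -/
theorem sum_add_le_of_mem_epsCore (hveto : ∀ S : Finset ι, a ∉ S → v S = 0)
    {S : Finset ι} (haS : a ∈ S) (hS : S ≠ univ) {ε : ℝ} {x : ι → ℝ}
    (hx : x ∈ epsCore v ε) : ∑ i ∈ S, x i + ε ≤ v univ := by
  have haSc : a ∉ Sᶜ := notMem_compl.mpr haS
  have hSc := hx.2 Sᶜ (nonempty_iff_ne_empty.mpr (by rwa [Ne, compl_eq_empty_iff]))
    fun h => haSc (h ▸ mem_univ a)
  rw [hveto _ haSc, zero_add] at hSc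
  linarith [sum_compl_add_sum S x, hx.1]

theorem add_two_mul_le_of_mem_epsCore (hveto : ∀ S : Finset ι, a ∉ S → v S = 0)
    {S : Finset ι} (haS : a ∈ S) (hS : S ≠ univ) {ε : ℝ} {x : ι → ℝ}
    (hx : x ∈ epsCore v ε) : v S + 2 * ε ≤ v univ := by
  linarith [hx.2 S ⟨a, haS⟩ hS, sum_add_le_of_mem_epsCore hveto haS hS hx]

theorem add_three_mul_le_of_mem_epsCore (hveto : ∀ S : Finset ι, a ∉ S → v S = 0)
    {k : ι} (hak : a ≠ k) {S : Finset ι} (haS : a ∈ S) (hkS : k ∈ S) (hS : S ≠ univ)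
    {ε : ℝ} {x : ι → ℝ} (hx : x ∈ epsCore v ε) :
    v S + 3 * ε ≤ 2 * v univ - v (univ.erase k) := by
  have haSk : a ∈ S.erase k := mem_erase.mpr ⟨hak, haS⟩
  have hSk : S.erase k ≠ univ := fun h => notMem_erase k S (h ▸ mem_univ k)
  have hNk : univ.erase k ≠ univ := (erase_ssubset (mem_univ k)).ne
  have hxk : x k + v (univ.erase k) + ε ≤ v univ := by
    linarith [hx.1, hx.2 _ ⟨a, mem_erase.mpr ⟨hak, mem_univ a⟩⟩ hNk,
      sum_erase_add univ x (mem_univ k)]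
  linarith [hx.2 S ⟨a, haS⟩ hS, sum_add_le_of_mem_epsCore hveto haSk hSk hx,
    sum_erase_add S x hkS]

/-- `lcv v` is an `sSup`, which is the junk value `0` when every ε-core is empty. -/
theorem lcv_le_of_forall_mem_epsCore (h0 : lcv v ≠ 0) {c : ℝ}
    (h : ∀ ε (x : ι → ℝ), x ∈ epsCore v ε → ε ≤ c) : lcv v ≤ c := by
  refine csSup_le ?_ fun ε ⟨x, hx⟩ => h ε x hx
  by_contra hE
  exact h0 (by rw [lcv, Set.not_nonempty_iff_eq_empty.mp hE, Real.sSup_empty])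

theorem add_two_mul_lcv_le (hveto : ∀ S : Finset ι, a ∉ S → v S = 0) (h0 : lcv v ≠ 0)
    {S : Finset ι} (haS : a ∈ S) (hS : S ≠ univ) : v S + 2 * lcv v ≤ v univ := by
  have := lcv_le_of_forall_mem_epsCore h0 fun ε x hx =>
    show ε ≤ (v univ - v S) / 2 by linarith [add_two_mul_le_of_mem_epsCore hveto haS hS hx]
  linarith

theorem add_three_mul_lcv_le (hveto : ∀ S : Finset ι, a ∉ S → v S = 0) (h0 : lcv v ≠ 0)
    {k : ι} (hak : a ≠ k) {S : Finset ι} (haS : a ∈ S) (hkS : k ∈ S) (hS : S ≠ univ) :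
    v S + 3 * lcv v ≤ 2 * v univ - v (univ.erase k) := by
  have := lcv_le_of_forall_mem_epsCore h0 fun ε x hx =>
    show ε ≤ (2 * v univ - v (univ.erase k) - v S) / 3 by
      linarith [add_three_mul_le_of_mem_epsCore hveto hak haS hkS hS hx]
  linarith

/-- `ε (|N| - |S| + 1) = v(N) - v(S) ≥ 2ε` with `ε < 0` bounds the denominator by `2`. -/
theorem card_eq_of_excessRatio_neg {S : Finset ι} (hS : S ≠ univ) {ε : ℝ}
    (hε : excessRatio v S = ε) (hneg : ε < 0) (hle : v S + 2 * ε ≤ v univ) :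
    S.card = Fintype.card ι - 1 := by
  have hmul := excessRatio_mul_denom v S
  rw [hε] at hmul
  have hlt := (card_lt_iff_ne_univ S).mpr hS
  have : (Fintype.card ι : ℝ) ≤ S.card + 1 := by nlinarith
  have : Fintype.card ι ≤ S.card + 1 := by exact_mod_cast this
  omega

theorem eq_erase_of_card_eq {S : Finset ι} (hcard : S.card = Fintype.card ι - 1) {k : ι}
    (hk : k ∉ S) : S = univ.erase k :=
  eq_of_subset_of_card_le (fun i hi => mem_erase.mpr ⟨ne_of_mem_of_not_mem hi hk, mem_univ i⟩)
    (by rw [card_erase_of_mem (mem_univ k), card_univ, hcard])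

end TUGame

open TUGame in
theorem stmt18_general {ι : Type*} [Fintype ι] [DecidableEq ι] (v : Finset ι → ℝ) (a : ι)
    (hveto : ∀ S : Finset ι, a ∉ S → v S = 0)
    (hcore : ¬ (epsCore v 0).Nonempty)
    (hPa : (Pa a).Nonempty)
    (εhat : ℝ) (hεhat : εhat = (Pa a).inf' hPa (excessRatio v))
    (Shat : Finset ι) (hShat : Shat ∈ Pa a)
    (hattain : excessRatio v Shat = εhat)
    (hstar : lcv v = εhat) :
    Shat.card = Fintype.card ι - 1 ∧
    ∀ k : ι, k ∉ Shat →
      ((∀ S : Finset ι, S.Nonempty → S ≠ Finset.univ → a ∈ S → k ∈ S →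
          v S + εhat ≤ v Finset.univ) ∧
       (∀ S : Finset ι, S.Nonempty → S ≠ Finset.univ → a ∈ S → k ∉ S →
          v S + 2 * εhat ≤ v Finset.univ)) := by
  obtain ⟨haShat, hShat⟩ := mem_Pa.mp hShat
  have hneg : εhat < 0 := hεhat ▸ inf'_excessRatio_neg hveto hcore hPa
  have h0 : lcv v ≠ 0 := hstar ▸ hneg.ne
  have hcard := card_eq_of_excessRatio_neg hShat hattain hneg
    (hstar ▸ add_two_mul_lcv_le hveto h0 haShat hShat)
  refine ⟨hcard, fun k hk => ⟨fun S _ hS haS hkS => ?_, fun S _ hS haS _ => ?_⟩⟩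
  · have hgap : v univ - v Shat = 2 * εhat := by
      have hmul := excessRatio_mul_denom v Shat
      rw [hattain, hcard, Nat.cast_sub (Fintype.card_pos_iff.mpr ⟨a⟩), Nat.cast_one] at hmul
      linarith
    have := add_three_mul_lcv_le hveto h0 (ne_of_mem_of_not_mem haShat hk) haS hkS hS
    rw [← eq_erase_of_card_eq hcard hk, hstar] at this
    linarith
  · linarith [hstar ▸ add_two_mul_lcv_le hveto h0 haS hS]

/-- ('Only if' direction of the unbalanced characterization.) Suppose the core is
empty and `ε* = ε̂ = min{(v(N)−v(S))/(|N|−|S|+1) : S proper, a ∈ S}` is attained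
at `Ŝ`. Then `|Ŝ| = |N| − 1` and the unique player `k ∉ Ŝ` satisfies
`v(N) ≥ v(S) + ε̂` for every proper `S ∋ a` with `k ∈ S`, and
`v(N) ≥ v(S) + 2ε̂` for every proper `S ∋ a` with `k ∉ S`. -/
theorem stmt18 {ι : Type*} [Fintype ι] [DecidableEq ι] (v : Finset ι → ℝ) (a : ι)
    (hcard : 3 ≤ Fintype.card ι)
    (hempty : v ∅ = 0)
    (hveto : ∀ S : Finset ι, a ∉ S → v S = 0)
    (hcore : ¬ (epsCore v 0).Nonempty)
    (hPa : (Pa a).Nonempty)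
    (εhat : ℝ) (hεhat : εhat = (Pa a).inf' hPa (excessRatio v))
    (Shat : Finset ι) (hShat : Shat ∈ Pa a)
    (hattain : excessRatio v Shat = εhat)
    (hstar : lcv v = εhat) :
    Shat.card = Fintype.card ι - 1 ∧
    ∀ k : ι, k ∉ Shat →
      ((∀ S : Finset ι, S.Nonempty → S ≠ Finset.univ → a ∈ S → k ∈ S →
          v S + εhat ≤ v Finset.univ) ∧
       (∀ S : Finset ι, S.Nonempty → S ≠ Finset.univ → a ∈ S → k ∉ S →
          v S + 2 * εhat ≤ v Finset.univ)) :=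
  stmt18_general v a hveto hcore hPa εhat hεhat Shat hShat hattain hstar
end

section
/- Let (N,v) be a TU game with veto player a, empty core, and ε̂ := min{ (v(N)−v(S))/(|N|−|S|+1) : S proper, a ∈ S } attained at Ŝ = N\{k} for a player k ≠ a. If v(N) ≥ v(S) + ε̂ for every proper S with a,k ∈ S and v(N) ≥ v(S) + 2ε̂ for every proper S with a ∈ S, k ∉ S, then ε* = ε̂ and the allocation x with x_k = ε̂ and x_i = 0 for i ≠ k (and x_a = v(N) − ε̂) is in the least core C_{ε̂}. -/
/-! For the bound `ε* ≤ ε̂`, add the `ε`-core constraints of `{k}` and of its complement: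
as `v {k} = 0` by the veto property, every `ε` with `C_ε ≠ ∅` satisfies
`v (N \ {k}) + 2ε ≤ v N`, while attainment at `N \ {k}` says `v N - v (N \ {k}) = 2ε̂`.
The allocation `x̌` meets each constraint of `C_ε̂` by a case split on whether `a` and `k`
lie in `S`; the case `a, k ∉ S` needs `ε̂ ≤ 0`, which holds because an empty core forces
`v S > v N` for some proper `S ∋ a`. -/

open Finset

section

variable {ι : Type*} [Fintype ι] [DecidableEq ι] {v : Finset ι → ℝ}

theorem add_add_two_mul_le_of_mem_epsCore {ε : ℝ} {x : ι → ℝ} (hx : x ∈ epsCore v ε)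
    {S : Finset ι} (hS : S.Nonempty) (hSc : Sᶜ.Nonempty) :
    v S + v Sᶜ + 2 * ε ≤ v univ := by
  have hS_ne : S ≠ univ := by simpa using (compl_ne_univ_iff_nonempty Sᶜ).2 hSc
  have hSc_ne : Sᶜ ≠ univ := (compl_ne_univ_iff_nonempty S).2 hS
  have hsum := sum_add_sum_compl S x
  linarith [hx.1, hx.2 S hS hS_ne, hx.2 Sᶜ hSc hSc_ne]

theorem excessRatio_nonneg_iff {S : Finset ι} : 0 ≤ excessRatio v S ↔ v S ≤ v univ := by
  have hcard : (S.card : ℝ) ≤ Fintype.card ι := by exact_mod_cast card_le_univ S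
  rw [excessRatio, le_div_iff₀ (by linarith), zero_mul, sub_nonneg]

theorem excessRatio_univ_erase (k : ι) :
    excessRatio v (univ.erase k) = (v univ - v (univ.erase k)) / 2 := by
  have hcard : (univ.erase k).card + 1 = Fintype.card ι := card_erase_add_one (mem_univ k)
  rw [excessRatio, ← hcard]
  push_cast
  ring_nf

theorem pi_single_mem_epsCore_zero {a : ι} (hveto : ∀ S : Finset ι, a ∉ S → v S = 0)
    (hle : ∀ S : Finset ι, a ∈ S → S ≠ univ → v S ≤ v univ) :
    Pi.single a (v univ) ∈ epsCore v 0 := by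
  refine ⟨by simp, fun S _ hS => ?_⟩
  rw [add_zero, sum_pi_single']
  split_ifs with haS
  · exact hle S haS hS
  · exact (hveto S haS).le

theorem inf'_excessRatio_neg {a : ι} (hveto : ∀ S : Finset ι, a ∉ S → v S = 0)
    (hcore : ¬ (epsCore v 0).Nonempty) (hPa : (Pa a).Nonempty) :
    (Pa a).inf' hPa (excessRatio v) < 0 := by
  by_contra! h
  refine hcore ⟨_, pi_single_mem_epsCore_zero hveto fun S haS hS => ?_⟩
  exact excessRatio_nonneg_iff.1 (h.trans (inf'_le _ (by simp [Pa, haS, hS])))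

theorem ite_mem_epsCore {a k : ι} {ε : ℝ} (hveto : ∀ S : Finset ι, a ∉ S → v S = 0)
    (hka : k ≠ a) (hε : ε ≤ 0)
    (h1 : ∀ S : Finset ι, S.Nonempty → S ≠ univ → a ∈ S → k ∈ S → v S + ε ≤ v univ)
    (h2 : ∀ S : Finset ι, S.Nonempty → S ≠ univ → a ∈ S → k ∉ S → v S + 2 * ε ≤ v univ) :
    (fun i => if i = a then v univ - ε else if i = k then ε else 0) ∈ epsCore v ε := by
  have hx : (fun i => if i = a then v univ - ε else if i = k then ε else 0) =
      Pi.single a (v univ - ε) + Pi.single k ε := by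
    ext i
    rcases eq_or_ne i a with rfl | hia
    · simp [hka.symm]
    · rcases eq_or_ne i k with rfl | hik <;> simp [*]
  have hsum (S : Finset ι) : ∑ i ∈ S, (Pi.single a (v univ - ε) + Pi.single k ε : ι → ℝ) i =
      (if a ∈ S then v univ - ε else 0) + if k ∈ S then ε else 0 := by
    simp only [Pi.add_apply, sum_add_distrib, sum_pi_single']
  rw [hx]
  refine ⟨by rw [hsum]; simp, fun S hS hSu => ?_⟩
  rw [hsum]
  by_cases haS : a ∈ S <;> by_cases hkS : k ∈ S <;> simp only [haS, hkS, if_true, if_false]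
  · linarith [h1 S hS hSu haS hkS]
  · linarith [h2 S hS hSu haS hkS]
  · simp [hveto S haS]
  · simp [hveto S haS, hε]

end

theorem stmt19_general {ι : Type*} [Fintype ι] [DecidableEq ι] (v : Finset ι → ℝ) (a k : ι)
    (hveto : ∀ S : Finset ι, a ∉ S → v S = 0)
    (hcore : ¬ (epsCore v 0).Nonempty)
    (hka : k ≠ a)
    (hPa : (Pa a).Nonempty)
    (εhat : ℝ) (hεhat : εhat = (Pa a).inf' hPa (excessRatio v))
    (hattain : excessRatio v (Finset.univ.erase k) = εhat)
    (h1 : ∀ S : Finset ι, S.Nonempty → S ≠ Finset.univ → a ∈ S → k ∈ S →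
      v S + εhat ≤ v Finset.univ)
    (h2 : ∀ S : Finset ι, S.Nonempty → S ≠ Finset.univ → a ∈ S → k ∉ S →
      v S + 2 * εhat ≤ v Finset.univ) :
    lcv v = εhat ∧
    (fun i => if i = a then v Finset.univ - εhat else if i = k then εhat else 0)
      ∈ epsCore v εhat := by
  have hneg : εhat < 0 := hεhat ▸ inf'_excessRatio_neg hveto hcore hPa
  have hmem := ite_mem_epsCore hveto hka hneg.le h1 h2
  refine ⟨IsGreatest.csSup_eq ⟨⟨_, hmem⟩, ?_⟩, hmem⟩
  rintro ε ⟨x, hx⟩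
  have hbound := add_add_two_mul_le_of_mem_epsCore hx (S := {k}) (singleton_nonempty k)
    ⟨a, by simpa using hka.symm⟩
  rw [compl_singleton, hveto {k} (by simpa using hka.symm)] at hbound
  rw [excessRatio_univ_erase] at hattain
  linarith

/-- ('If' direction of the unbalanced characterization.) Suppose the core is empty
and `ε̂ = min{(v(N)−v(S))/(|N|−|S|+1) : S proper, a ∈ S}` is attained at
`Ŝ = N \ {k}` with `k ≠ a`. If `v(N) ≥ v(S) + ε̂` for every proper `S` containing
both `a` and `k`, and `v(N) ≥ v(S) + 2ε̂` for every proper `S ∋ a` with `k ∉ S`,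
then `ε* = ε̂` and the allocation `x̌` with `x̌_k = ε̂`, `x̌_a = v(N) − ε̂` and
`x̌_i = 0` otherwise, belongs to the least core `C_{ε̂}`. -/
theorem stmt19 {ι : Type*} [Fintype ι] [DecidableEq ι] (v : Finset ι → ℝ) (a k : ι)
    (hcard : 3 ≤ Fintype.card ι)
    (hempty : v ∅ = 0)
    (hveto : ∀ S : Finset ι, a ∉ S → v S = 0)
    (hcore : ¬ (epsCore v 0).Nonempty)
    (hka : k ≠ a)
    (hPa : (Pa a).Nonempty)
    (εhat : ℝ) (hεhat : εhat = (Pa a).inf' hPa (excessRatio v))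
    (hattain : excessRatio v (Finset.univ.erase k) = εhat)
    (h1 : ∀ S : Finset ι, S.Nonempty → S ≠ Finset.univ → a ∈ S → k ∈ S →
      v S + εhat ≤ v Finset.univ)
    (h2 : ∀ S : Finset ι, S.Nonempty → S ≠ Finset.univ → a ∈ S → k ∉ S →
      v S + 2 * εhat ≤ v Finset.univ) :
    lcv v = εhat ∧
    (fun i => if i = a then v Finset.univ - εhat else if i = k then εhat else 0)
      ∈ epsCore v εhat :=
  stmt19_general v a k hveto hcore hka hPa εhat hεhat hattain h1 h2
end
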